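/- arXiv:hep-th/9111025 — 2 statements merged into one kernel-verified Lean document; each statement's English description precedes it below -/
import Mathlib

section
/- Let k_0,…,k_4 be positive integers with k := Σ k_j, suppose each d_j := k/k_j is an integer, and suppose gcd{k_j : j ≠ j_0} = 1 for every index j_0. Then k = lcm{d_0,…,d_4}. -/
/-- If `k = Σ k_j`, each `d_j = k / k_j` is an integer, and omitting any one weight
the remaining weights have gcd 1, then `k = lcm{d_j}`. -/
theorem stmt_3 (k : Fin 5 → ℕ) (hk : ∀ j, 0 < k j)
    (K : ℕ) (hK : K = ∑ j, k j)
    (hdvd : ∀ j, k j ∣ K)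
    (hgcd : ∀ j₀ : Fin 5, (Finset.univ.erase j₀).gcd k = 1) :
    K = Finset.univ.lcm (fun j => K / k j) := by
  set L := Finset.univ.lcm (fun j => K / k j) with hL
  have hLK : L ∣ K := by
    apply Finset.lcm_dvd
    intro j _
    exact Nat.div_dvd_of_dvd (hdvd j)
  have hgall : Finset.univ.gcd k = 1 := by
    have h1 : Finset.univ.gcd k ∣ (Finset.univ.erase 0).gcd k := by
      apply Finset.dvd_gcd
      intro j hj
      exact Finset.gcd_dvd (Finset.mem_univ j)
    rw [hgcd 0] at h1
    exact Nat.eq_one_of_dvd_one h1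
  have hKL : K ∣ L := by
    have h : ∀ j : Fin 5, K ∣ L * k j := by
      intro j
      have hd : K / k j ∣ L := Finset.dvd_lcm (Finset.mem_univ j)
      calc K = (K / k j) * k j := (Nat.div_mul_cancel (hdvd j)).symm
        _ ∣ L * k j := mul_dvd_mul_right hd (k j)
    have h2 : K ∣ Finset.univ.gcd (fun j => L * k j) :=
      Finset.dvd_gcd fun j _ => h j
    rw [Finset.gcd_mul_left, hgall, mul_one] at h2; simpa using h2
  exact Nat.dvd_antisymm hKL hLK
end

section
/- Let V be a ℂ-vector space, B : V × V → ℂ an alternating bilinear form, and ω a smooth V-valued function of z satisfying B(ω,ω^{(k)}) = 0 for k = 0,1,2 identically. Suppose ω satisfies the fourth-order linear ODE ω'''' + C_3(z)ω''' + C_2(z)ω'' + C_1(z)ω' + C_0(z)ω = 0. Then the Yukawa coupling W_3(z) := B(ω(z), ω'''(z)) satisfies the first-order ODE W_3'(z) = -(1/2)·C_3(z)·W_3(z). -/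
/-!
Since `B` is only algebraically bilinear, the real issue is to differentiate `B(ω, ω''')` at all.
The ODE confines the derivatives of `ω` to a finite-dimensional subspace near every point: near a
point `z₁` where the rank of `ω, …, ω'''` is locally maximal, a maximal independent family among
them is a moving frame closed under differentiation (its coefficients are differentiable by
Cramer's rule), so all `ω⁽ᵐ⁾(z₁)` lie in one finite-dimensional `T`, and analyticity of `ψ ∘ ω`
for the functionals `ψ` vanishing on `T` spreads this over a disc around the original point.
On a finite-dimensional subspace `B` agrees with a continuous bilinear form, and the computation
is the classical one: differentiating `B(ω, ω'') = 0` twice and using `B(ω'', ω'') = 0` gives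
`W₃' = ½ B(ω, ω'''')`, which the ODE turns into `-½ C₃ W₃`.
-/

open Set Filter Topology Metric

theorem Set.Nonempty.exists_max_image_nat {α : Type*} {s : Set α} (hs : s.Nonempty) {g : α → ℕ}
    {n : ℕ} (hg : ∀ x ∈ s, g x ≤ n) : ∃ x ∈ s, ∀ y ∈ s, g y ≤ g x := by
  obtain ⟨_, ⟨x, hx, rfl⟩, hmax⟩ := exists_max_image (g '' s) id
    ((finite_Iic n).subset (image_subset_iff.2 hg)) (hs.image g)
  exact ⟨x, hx, fun y hy => hmax _ (mem_image_of_mem g hy)⟩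

theorem Matrix.cramer_mulVec {n R : Type*} [Fintype n] [DecidableEq n] [CommRing R]
    (A : Matrix n n R) (a : n → R) : A.cramer (A.mulVec a) = A.det • a := by
  rw [cramer_eq_adjugate_mulVec, mulVec_mulVec, adjugate_mul, smul_mulVec, one_mulVec]

theorem DifferentiableAt.matrix_det {𝕜 : Type*} [NontriviallyNormedField 𝕜] {n : Type*}
    [Fintype n] [DecidableEq n] {M : 𝕜 → Matrix n n 𝕜} {w : 𝕜}
    (hM : ∀ i j, DifferentiableAt 𝕜 (fun z => M z i j) w) :
    DifferentiableAt 𝕜 (fun z => (M z).det) w := by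
  simp only [Matrix.det_apply']
  exact .fun_sum fun σ _ => (DifferentiableAt.fun_finsetProd fun i _ => hM (σ i) i).const_mul _

theorem LinearMap.exists_continuous_eq_on_finiteDimensional {𝕜 : Type*} [RCLike 𝕜]
    {E F G : Type*} [NormedAddCommGroup E] [NormedSpace 𝕜 E] [NormedAddCommGroup F]
    [NormedSpace 𝕜 F] [NormedAddCommGroup G] [NormedSpace 𝕜 G] (B : E →ₗ[𝕜] F →ₗ[𝕜] G)
    (S : Submodule 𝕜 E) (T : Submodule 𝕜 F) [FiniteDimensional 𝕜 S] [FiniteDimensional 𝕜 T] :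
    ∃ B' : E →L[𝕜] F →L[𝕜] G, ∀ x ∈ S, ∀ y ∈ T, B' x y = B x y := by
  obtain ⟨πS, hπS⟩ := Submodule.ClosedComplemented.of_finiteDimensional S
  obtain ⟨πT, hπT⟩ := Submodule.ClosedComplemented.of_finiteDimensional T
  let B₀ : S →L[𝕜] T →L[𝕜] G := LinearMap.toContinuousLinearMap
    (LinearMap.toContinuousLinearMap.toLinearMap ∘ₗ B.compl₁₂ S.subtype T.subtype)
  refine ⟨B₀.bilinearComp πS πT, fun x hx y hy => ?_⟩
  simp [B₀, hπS ⟨x, hx⟩, hπT ⟨y, hy⟩]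

section IteratedDeriv

variable {𝕜 : Type*} [NontriviallyNormedField 𝕜] {E : Type*} [NormedAddCommGroup E]
  [NormedSpace 𝕜 E] {f : 𝕜 → E} {U : Set 𝕜}

theorem ContDiffOn.iteratedDeriv_of_isOpen (hf : ContDiffOn 𝕜 ⊤ f U) (hU : IsOpen U) (m : ℕ) :
    ContDiffOn 𝕜 ⊤ (iteratedDeriv m f) U := by
  induction m with
  | zero => simpa using hf
  | succ m ih => simpa [iteratedDeriv_succ] using ih.deriv_of_isOpen hU le_top

theorem ContDiffOn.hasDerivAt_iteratedDeriv (hf : ContDiffOn 𝕜 ⊤ f U) (hU : IsOpen U) (m : ℕ)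
    {z : 𝕜} (hz : z ∈ U) : HasDerivAt (iteratedDeriv m f) (iteratedDeriv (m + 1) f z) z := by
  rw [iteratedDeriv_succ]
  exact (((hf.iteratedDeriv_of_isOpen hU m).differentiableOn (by simp)).differentiableAt
    (hU.mem_nhds hz)).hasDerivAt

theorem ContinuousLinearMap.iteratedDeriv_comp_left {F : Type*} [NormedAddCommGroup F]
    [NormedSpace 𝕜 F] (g : E →L[𝕜] F) {z : 𝕜} (hf : ContDiffAt 𝕜 ⊤ f z) (m : ℕ) :
    iteratedDeriv m (g ∘ f) z = g (iteratedDeriv m f z) := by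
  simp [iteratedDeriv_eq_iteratedFDeriv, g.iteratedFDeriv_comp_left hf le_top]

variable (f) in
def iteratedDerivSpan {ι : Type*} (a : ι → ℕ) (w : 𝕜) : Submodule 𝕜 E :=
  Submodule.span 𝕜 (range fun k => iteratedDeriv (a k) f w)

end IteratedDeriv

section MovingFrame

variable {𝕜 : Type*} [RCLike 𝕜] {E : Type*} [NormedAddCommGroup E] [NormedSpace 𝕜 E]
  {ι : Type*} [Fintype ι] [DecidableEq ι]

theorem exists_differentiableAt_coeffs {e : ι → 𝕜 → E} {g : 𝕜 → E} {w : 𝕜}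
    (he : ∀ k, DifferentiableAt 𝕜 (e k) w) (hind : LinearIndependent 𝕜 fun k => e k w)
    (hg : DifferentiableAt 𝕜 g w)
    (hmem : ∀ᶠ z in 𝓝 w, g z ∈ Submodule.span 𝕜 (range fun k => e k z)) :
    ∃ c : ι → 𝕜 → 𝕜, (∀ k, DifferentiableAt 𝕜 (c k) w) ∧
      ∀ᶠ z in 𝓝 w, g z = ∑ k, c k z • e k z := by
  set T := Submodule.span 𝕜 (range fun k => e k w)
  have : FiniteDimensional 𝕜 T := .span_of_finite 𝕜 (finite_range _)
  obtain ⟨π, hπ⟩ := Submodule.ClosedComplemented.of_finiteDimensional T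
  let Φ : E →L[𝕜] ι → 𝕜 := (Module.Basis.span hind).equivFunL.toContinuousLinearMap ∘L π
  let M : 𝕜 → Matrix ι ι 𝕜 := fun z => .of fun i k => Φ (e k z) i
  have hM : ∀ i k, DifferentiableAt 𝕜 (fun z => M z i k) w := fun i k =>
    ((ContinuousLinearMap.proj i).comp Φ).differentiableAt.comp w (he k)
  have hMw : M w = 1 := by
    ext i k
    have : π (e k w) = Module.Basis.span hind k :=
      (hπ ⟨_, Submodule.subset_span (mem_range_self k)⟩).trans (Subtype.ext (by simp))
    simp [M, Φ, this, Matrix.one_apply, Finsupp.single_apply, eq_comm]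
  have hdet : ∀ᶠ z in 𝓝 w, (M z).det ≠ 0 :=
    (DifferentiableAt.matrix_det hM).continuousAt.eventually_ne (by simp [hMw])
  -- Cramer's rule for `M z *ᵥ c = Φ (g z)`
  refine ⟨fun k z => ((M z).det)⁻¹ * (M z).cramer (Φ (g z)) k, fun k => ?_, ?_⟩
  · simp only [Matrix.cramer_apply]
    refine ((DifferentiableAt.matrix_det hM).inv (by simp [hMw])).mul
      (DifferentiableAt.matrix_det fun i j => ?_)
    by_cases hjk : j = k
    · simp only [hjk, Matrix.updateCol_self]
      exact ((ContinuousLinearMap.proj i).comp Φ).differentiableAt.comp w hg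
    · simpa [hjk] using hM i j
  · filter_upwards [hmem, hdet] with z hz hz'
    obtain ⟨a, ha⟩ := (Submodule.mem_span_range_iff_exists_fun 𝕜).1 hz
    have hΦ : Φ (g z) = (M z).mulVec a := by
      ext i; simp [← ha, M, Matrix.mulVec, dotProduct, mul_comm]
    simp only [hΦ, Matrix.cramer_mulVec, Pi.smul_apply, smul_eq_mul, inv_mul_cancel_left₀ hz', ha]

theorem deriv_mem_span_of_eventually_mem_span {e : ι → 𝕜 → E} {g : 𝕜 → E} {w : 𝕜}
    (he : ∀ k, DifferentiableAt 𝕜 (e k) w) (hind : LinearIndependent 𝕜 fun k => e k w)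
    (hg : DifferentiableAt 𝕜 g w)
    (hmem : ∀ᶠ z in 𝓝 w, g z ∈ Submodule.span 𝕜 (range fun k => e k z)) :
    deriv g w ∈ Submodule.span 𝕜 (range fun k => e k w) ⊔
      Submodule.span 𝕜 (range fun k => deriv (e k) w) := by
  obtain ⟨c, hc, hgc⟩ := exists_differentiableAt_coeffs he hind hg hmem
  have hsum : HasDerivAt (fun z => ∑ k, c k z • e k z)
      (∑ k, (c k w • deriv (e k) w + deriv (c k) w • e k w)) w :=
    .fun_sum fun k _ => (hc k).hasDerivAt.smul (he k).hasDerivAt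
  rw [(hsum.congr_of_eventuallyEq hgc).deriv]
  refine Submodule.sum_mem _ fun k _ => Submodule.add_mem _ ?_ ?_
  · exact Submodule.mem_sup_right (Submodule.smul_mem _ _ (Submodule.subset_span ⟨k, rfl⟩))
  · exact Submodule.mem_sup_left (Submodule.smul_mem _ _ (Submodule.subset_span ⟨k, rfl⟩))

theorem iteratedDeriv_mem_iteratedDerivSpan {f : 𝕜 → E} {a : ι → ℕ} {A : Set 𝕜}
    (hA : IsOpen A) (hf : ContDiffOn 𝕜 ⊤ f A)
    (hind : ∀ w ∈ A, LinearIndependent 𝕜 fun k => iteratedDeriv (a k) f w)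
    (hf0 : ∀ w ∈ A, f w ∈ iteratedDerivSpan f a w)
    (hsucc : ∀ w ∈ A, ∀ k, iteratedDeriv (a k + 1) f w ∈ iteratedDerivSpan f a w) (m : ℕ) :
    ∀ w ∈ A, iteratedDeriv m f w ∈ iteratedDerivSpan f a w := by
  induction m with
  | zero => simpa using hf0
  | succ m ih =>
    intro w hw
    have hderiv := deriv_mem_span_of_eventually_mem_span
      (fun k => (hf.hasDerivAt_iteratedDeriv hA (a k) hw).differentiableAt) (hind w hw)
      (hf.hasDerivAt_iteratedDeriv hA m hw).differentiableAt (eventually_of_mem (hA.mem_nhds hw) ih)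
    simp only [← iteratedDeriv_succ] at hderiv
    exact sup_le le_rfl (Submodule.span_le.2 (range_subset_iff.2 (hsucc w hw))) hderiv

end MovingFrame

section FiniteDimensionality

variable {V : Type*} [NormedAddCommGroup V] [NormedSpace ℂ V] {f : ℂ → V}

theorem iteratedDeriv_mem_of_iteratedDeriv_center_mem {c : ℂ} {R : ℝ} {S : Submodule ℂ V}
    [IsClosed (S : Set V)] (hf : ContDiffOn ℂ ⊤ f (ball c R))
    (hc : ∀ m, iteratedDeriv m f c ∈ S) : ∀ w ∈ ball c R, ∀ m, iteratedDeriv m f w ∈ S := by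
  intro w hw m
  by_contra hx
  obtain ⟨g, hg⟩ := SeparatingDual.exists_ne_zero (R := ℂ)
    (x := S.mkQ (iteratedDeriv m f w)) (by simpa [Submodule.Quotient.mk_eq_zero] using hx)
  set ψ := g ∘L S.mkQL
  have hsmooth : ∀ z ∈ ball c R, ContDiffAt ℂ ⊤ f z := fun z hz =>
    hf.contDiffAt (isOpen_ball.mem_nhds hz)
  have hzero : ∀ z ∈ ball c R, (ψ ∘ f) z = 0 := by
    intro z hz
    rw [← Complex.taylorSeries_eq_on_ball' hz
      (ψ.differentiable.comp_differentiableOn (hf.differentiableOn (by simp)))]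
    simp [ψ.iteratedDeriv_comp_left (hsmooth c (mem_ball_self (pos_of_mem_ball hw))),
      ψ, (Submodule.Quotient.mk_eq_zero S).2 (hc _)]
  have hψf : ψ ∘ f =ᶠ[𝓝 w] fun _ => 0 := eventually_of_mem (isOpen_ball.mem_nhds hw) hzero
  have := (ψ.iteratedDeriv_comp_left (hsmooth w hw) m).symm.trans (hψf.iteratedDeriv_eq m)
  exact hg (by simpa [ψ] using this)

open Module in
theorem exists_finiteDimensional_eventually_iteratedDeriv_mem {U : Set ℂ} (hU : IsOpen U)
    (hf : ContDiffOn ℂ ⊤ f U) {r : ℕ}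
    (hode : ∀ w ∈ U, iteratedDeriv r f w ∈ iteratedDerivSpan f (Fin.val : Fin r → ℕ) w)
    {z : ℂ} (hz : z ∈ U) :
    ∃ S : Submodule ℂ V, FiniteDimensional ℂ S ∧ ∀ᶠ w in 𝓝 z, ∀ m, iteratedDeriv m f w ∈ S := by
  obtain ⟨ε, hε, hεU⟩ := Metric.isOpen_iff.1 hU z hz
  set Sig := iteratedDerivSpan f (Fin.val : Fin r → ℕ)
  obtain ⟨z₁, hz₁, hmax⟩ := (nonempty_ball (x := z)).2 (half_pos hε) |>.exists_max_image_nat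
    (g := fun w => finrank ℂ (Sig w)) fun w _ =>
      (finrank_range_le_card (R := ℂ) _).trans_eq (Fintype.card_fin r)
  have hz₁U : ball z₁ (ε / 2) ⊆ U := fun w hw => hεU <| mem_ball.2 <| by
    linarith [mem_ball.1 hw, mem_ball.1 hz₁, dist_triangle w z₁ z, half_pos hε]
  obtain ⟨κ, a, ha, hspan, hind⟩ :=
    exists_linearIndependent' ℂ (fun l : Fin r => iteratedDeriv l f z₁)
  have := Finite.of_injective a ha
  have := Fintype.ofFinite κ
  classical
  let P := iteratedDerivSpan f (fun k => (a k : ℕ))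
  obtain ⟨A, hA, hAo, hz₁A⟩ := _root_.eventually_nhds_iff.1 <|
    ((continuousAt_pi.2 fun k => (hf.hasDerivAt_iteratedDeriv hU (a k)
      (hz₁U (mem_ball_self (half_pos hε)))).continuousAt).eventually hind.eventually).and
      (isOpen_ball.mem_nhds hz₁)
  have hAU : A ⊆ U := fun w hw => hεU (mem_ball.2 (by linarith [mem_ball.1 (hA w hw).2]))
  -- by maximality of the rank at `z₁`, the frame spans all of `Sig` near `z₁`
  have hPSig : ∀ w ∈ A, P w = Sig w := by
    intro w hw
    have : FiniteDimensional ℂ (Sig w) := .span_of_finite ℂ (finite_range _)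
    refine Submodule.eq_of_le_of_finrank_le
      (Submodule.span_mono (range_subset_iff.2 fun k => ⟨a k, rfl⟩)) ?_
    calc finrank ℂ (Sig w) ≤ finrank ℂ (Sig z₁) := hmax w (hA w hw).2
      _ = Fintype.card κ := by rw [← finrank_span_eq_card hind, hspan]; rfl
      _ = finrank ℂ (P w) := (finrank_span_eq_card (hA w hw).1).symm
  have hSig : ∀ w ∈ U, ∀ l ≤ r, iteratedDeriv l f w ∈ Sig w := fun w hw l hl =>
    hl.eq_or_lt.elim (fun h => h ▸ hode w hw) fun h => Submodule.subset_span ⟨⟨l, h⟩, rfl⟩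
  have hinv := iteratedDeriv_mem_iteratedDerivSpan hAo (hf.mono hAU) (fun w hw => (hA w hw).1)
    (fun w hw => by simpa [P, hPSig w hw] using hSig w (hAU hw) 0 r.zero_le)
    (fun w hw k => by simpa [P, hPSig w hw] using hSig w (hAU hw) _ (a k).isLt)
  have : FiniteDimensional ℂ (P z₁) := .span_of_finite ℂ (finite_range _)
  have : IsClosed (P z₁ : Set V) := Submodule.closed_of_finiteDimensional _
  exact ⟨P z₁, inferInstance, eventually_of_mem (isOpen_ball.mem_nhds (mem_ball_comm.1 hz₁))
    (iteratedDeriv_mem_of_iteratedDeriv_center_mem (hf.mono hz₁U) fun m => hinv m z₁ hz₁A)⟩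

end FiniteDimensionality

section Bilinear

variable {𝕜 : Type*} [RCLike 𝕜] {E G : Type*} [NormedAddCommGroup E] [NormedSpace 𝕜 E]
  [NormedAddCommGroup G] [NormedSpace 𝕜 G] {f : 𝕜 → E} {U : Set 𝕜}

theorem ContDiffOn.hasDerivAt_bilinear_iteratedDeriv (B : E →L[𝕜] E →L[𝕜] G)
    (hf : ContDiffOn 𝕜 ⊤ f U) (hU : IsOpen U) (a b : ℕ) {z : 𝕜} (hz : z ∈ U) :
    HasDerivAt (fun w => B (iteratedDeriv a f w) (iteratedDeriv b f w))
      (B (iteratedDeriv (a + 1) f z) (iteratedDeriv b f z) +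
        B (iteratedDeriv a f z) (iteratedDeriv (b + 1) f z)) z := by
  rw [add_comm]
  exact B.hasDerivAt_of_bilinear (fun _ => hf.hasDerivAt_iteratedDeriv hU a hz)
    (fun _ => hf.hasDerivAt_iteratedDeriv hU b hz)

theorem ContDiffOn.hasDerivAt_bilinear_iteratedDeriv_three (B : E →L[𝕜] E →L[𝕜] G)
    (hf : ContDiffOn 𝕜 ⊤ f U) (hU : IsOpen U)
    (h02 : ∀ w ∈ U, B (f w) (iteratedDeriv 2 f w) = 0)
    {z : 𝕜} (hz : z ∈ U) (h22 : B (iteratedDeriv 2 f z) (iteratedDeriv 2 f z) = 0) :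
    HasDerivAt (fun w => B (f w) (iteratedDeriv 3 f w))
      ((2 : 𝕜)⁻¹ • B (f z) (iteratedDeriv 4 f z)) z := by
  let W (a b : ℕ) (w : 𝕜) := B (iteratedDeriv a f w) (iteratedDeriv b f w)
  have hW := hf.hasDerivAt_bilinear_iteratedDeriv B hU
  have h12 : ∀ w ∈ U, W 1 2 w + W 0 3 w = 0 := fun w hw =>
    (hW 0 2 hw).unique <| (hasDerivAt_const w 0).congr_of_eventuallyEq <|
      eventually_of_mem (hU.mem_nhds hw) fun v hv => by simpa [W] using h02 v hv
  have h13 : W 2 2 z + W 1 3 z + (W 1 3 z + W 0 4 z) = 0 :=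
    ((hW 1 2 hz).add (hW 0 3 hz)).unique <| (hasDerivAt_const z 0).congr_of_eventuallyEq <|
      eventually_of_mem (hU.mem_nhds hz) h12
  have h03 : B (iteratedDeriv 1 f z) (iteratedDeriv 3 f z) + B (f z) (iteratedDeriv 4 f z) =
      (2 : 𝕜)⁻¹ • B (f z) (iteratedDeriv 4 f z) := by
    simp only [W, h22, iteratedDeriv_zero] at h13
    linear_combination (norm := module) (2 : 𝕜)⁻¹ • h13
  simpa only [iteratedDeriv_zero, h03] using hW 0 3 hz

end Bilinear

theorem stmt_6_general (V : Type*) [NormedAddCommGroup V] [NormedSpace ℂ V]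
    (B : V →ₗ[ℂ] V →ₗ[ℂ] ℂ) (halt : ∀ v : V, B v v = 0)
    (U : Set ℂ) (hU : IsOpen U)
    (ω : ℂ → V) (C₀ C₁ C₂ C₃ : ℂ → ℂ)
    (hω : ContDiffOn ℂ ⊤ ω U)
    (h1 : ∀ z ∈ U, B (ω z) (iteratedDeriv 1 ω z) = 0)
    (h2 : ∀ z ∈ U, B (ω z) (iteratedDeriv 2 ω z) = 0)
    (hODE : ∀ z ∈ U,
      iteratedDeriv 4 ω z + C₃ z • iteratedDeriv 3 ω z + C₂ z • iteratedDeriv 2 ω z +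
        C₁ z • iteratedDeriv 1 ω z + C₀ z • ω z = 0) :
    ∀ z ∈ U, deriv (fun w => B (ω w) (iteratedDeriv 3 ω w)) z =
      -(1 / 2) * C₃ z * B (ω z) (iteratedDeriv 3 ω z) := by
  intro z hz
  have hspan : ∀ w ∈ U, iteratedDeriv 4 ω w ∈ iteratedDerivSpan ω (Fin.val : Fin 4 → ℕ) w :=
    fun w hw => (Submodule.mem_span_range_iff_exists_fun ℂ).2
      ⟨![-C₀ w, -C₁ w, -C₂ w, -C₃ w], by
        simp only [Fin.sum_univ_four, Matrix.cons_val, Fin.coe_ofNat_eq_mod, Nat.reduceMod,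
          iteratedDeriv_zero, neg_smul]
        linear_combination (norm := module) -hODE w hw⟩
  obtain ⟨S, _, hS⟩ := exists_finiteDimensional_eventually_iteratedDeriv_mem hU hω hspan hz
  obtain ⟨B', hB'⟩ := B.exists_continuous_eq_on_finiteDimensional S S
  obtain ⟨N, hNS, hN, hzN⟩ := _root_.eventually_nhds_iff.1 hS
  have hNS₀ : ∀ w ∈ N, ω w ∈ S := fun w hw => by simpa using hNS w hw 0
  have hderiv := ContDiffOn.hasDerivAt_bilinear_iteratedDeriv_three B'
    (hω.mono inter_subset_right) (hN.inter hU)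
    (fun w hw => (hB' _ (hNS₀ w hw.1) _ (hNS w hw.1 2)).trans (h2 w hw.2)) ⟨hzN, hz⟩
    ((hB' _ (hNS z hzN 2) _ (hNS z hzN 2)).trans (halt _))
  have hW : (fun w => B' (ω w) (iteratedDeriv 3 ω w)) =ᶠ[𝓝 z]
      fun w => B (ω w) (iteratedDeriv 3 ω w) :=
    eventually_of_mem (hN.mem_nhds hzN) fun w hw => hB' _ (hNS₀ w hw) _ (hNS w hw 3)
  have hB4 : B (ω z) (iteratedDeriv 4 ω z) = -(C₃ z * B (ω z) (iteratedDeriv 3 ω z)) := by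
    have := congrArg (B (ω z)) (hODE z hz)
    simp only [map_add, map_smul, smul_eq_mul, h1 z hz, h2 z hz, halt, map_zero] at this
    linear_combination this
  rw [(hderiv.congr_of_eventuallyEq hW.symm).deriv, hB' _ (hNS₀ z hzN) _ (hNS z hzN 4), hB4,
    smul_eq_mul]
  ring

/-- If `B` is alternating, `B(ω, ω^{(k)}) = 0` for `k = 0,1,2`, and `ω` satisfies the
fourth-order ODE `ω'''' + C₃ω''' + C₂ω'' + C₁ω' + C₀ω = 0`, then the Yukawa coupling
`W₃ = B(ω, ω''')` satisfies `W₃' = -(1/2)·C₃·W₃`. -/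
theorem stmt_6 (V : Type*) [NormedAddCommGroup V] [NormedSpace ℂ V]
    (B : V →ₗ[ℂ] V →ₗ[ℂ] ℂ) (halt : ∀ v : V, B v v = 0)
    (U : Set ℂ) (hU : IsOpen U)
    (ω : ℂ → V) (C₀ C₁ C₂ C₃ : ℂ → ℂ)
    (hω : ContDiffOn ℂ ⊤ ω U)
    (h0 : ∀ z ∈ U, B (ω z) (ω z) = 0)
    (h1 : ∀ z ∈ U, B (ω z) (iteratedDeriv 1 ω z) = 0)
    (h2 : ∀ z ∈ U, B (ω z) (iteratedDeriv 2 ω z) = 0)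
    (hODE : ∀ z ∈ U,
      iteratedDeriv 4 ω z + C₃ z • iteratedDeriv 3 ω z + C₂ z • iteratedDeriv 2 ω z +
        C₁ z • iteratedDeriv 1 ω z + C₀ z • ω z = 0) :
    ∀ z ∈ U, deriv (fun w => B (ω w) (iteratedDeriv 3 ω w)) z =
      -(1 / 2) * C₃ z * B (ω z) (iteratedDeriv 3 ω z) :=
  stmt_6_general V B halt U hU ω C₀ C₁ C₂ C₃ hω h1 h2 hODE
end
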